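/- Let K^T = ((X,τ₁),(Y,τ₂),R) be a CTSCR. Then the set of clopen object oriented semiconcepts of K^T is closed under the operations ⊓, ⊔, ¬, ⌟ and contains ⊤ and ⊥, and with these operations it satisfies all the axioms of a double Boolean algebra; moreover this dBa is pure: every clopen semiconcept x satisfies x⊓x = x or x⊔x = x. -/
import Mathlib


universe u v

/-- A double Boolean algebra (dBa). -/
structure DBA (D : Type u) where
  sup : D → D → D
  inf : D → D → D
  neg : D → D
  dneg : D → D
  top : D
  bot : D
  ax1a : ∀ x y, inf (inf x x) y = inf x y
  ax2a : ∀ x y, inf x y = inf y x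
  ax3a : ∀ x y z, inf x (inf y z) = inf (inf x y) z
  ax4a : ∀ x, neg (inf x x) = neg x
  ax5a : ∀ x y, inf x (sup x y) = inf x x
  ax6a : ∀ x y z, inf x (neg (inf (neg y) (neg z))) =
      neg (inf (neg (inf x y)) (neg (inf x z)))
  ax7a : ∀ x y, inf x (neg (inf (neg x) (neg y))) = inf x x
  ax8a : ∀ x y, neg (neg (inf x y)) = inf x y
  ax9a : ∀ x, inf x (neg x) = bot
  ax10a : neg bot = inf top top
  ax11a : neg top = bot
  ax1b : ∀ x y, sup (sup x x) y = sup x y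
  ax2b : ∀ x y, sup x y = sup y x
  ax3b : ∀ x y z, sup x (sup y z) = sup (sup x y) z
  ax4b : ∀ x, dneg (sup x x) = dneg x
  ax5b : ∀ x y, sup x (inf x y) = sup x x
  ax6b : ∀ x y z, sup x (dneg (sup (dneg y) (dneg z))) =
      dneg (sup (dneg (sup x y)) (dneg (sup x z)))
  ax7b : ∀ x y, sup x (dneg (sup (dneg x) (dneg y))) = sup x x
  ax8b : ∀ x y, dneg (dneg (sup x y)) = sup x y
  ax9b : ∀ x, sup x (dneg x) = top
  ax10b : dneg top = sup bot bot
  ax11b : dneg bot = top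
  ax12 : ∀ x, sup (inf x x) (inf x x) = inf (sup x x) (sup x x)

namespace DBA

variable {D : Type u} {E : Type v}

/-- x ∨ y := ¬(¬x ⊓ ¬y) -/
def vee (A : DBA D) (x y : D) : D := A.neg (A.inf (A.neg x) (A.neg y))

/-- x ∧ y := ⌟(⌟x ⊔ ⌟y) -/
def wedge (A : DBA D) (x y : D) : D := A.dneg (A.sup (A.dneg x) (A.dneg y))

/-- The quasi-order ⊑. -/
def le (A : DBA D) (x y : D) : Prop := A.inf x y = A.inf x x ∧ A.sup x y = A.sup y y

def IsFilter (A : DBA D) (F : Set D) : Prop :=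
  (∀ x ∈ F, ∀ y ∈ F, A.inf x y ∈ F) ∧ ∀ x ∈ F, ∀ z, A.le x z → z ∈ F

def IsIdeal (A : DBA D) (I : Set D) : Prop :=
  (∀ x ∈ I, ∀ y ∈ I, A.sup x y ∈ I) ∧ ∀ x ∈ I, ∀ z, A.le z x → z ∈ I

def IsPrimaryFilter (A : DBA D) (F : Set D) : Prop :=
  A.IsFilter F ∧ F ≠ Set.univ ∧ ∀ x, x ∈ F ∨ A.neg x ∈ F

def IsPrimaryIdeal (A : DBA D) (I : Set D) : Prop :=
  A.IsIdeal I ∧ I ≠ Set.univ ∧ ∀ x, x ∈ I ∨ A.dneg x ∈ I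

def Pure (A : DBA D) : Prop := ∀ x, A.inf x x = x ∨ A.sup x x = x

def Contextual (A : DBA D) : Prop := ∀ x y, A.le x y → A.le y x → x = y

def FullyContextual (A : DBA D) : Prop :=
  A.Contextual ∧
    ∀ y x, A.inf y y = y → A.sup x x = x → A.sup y y = A.inf x x →
      ∃! z, A.inf z z = y ∧ A.sup z z = x

/-- D_p = D_⊓ ∪ D_⊔ -/
def Dp (A : DBA D) : Set D := {x | A.inf x x = x} ∪ {x | A.sup x x = x}

def IsHom (A : DBA D) (B : DBA E) (h : D → E) : Prop :=
  (∀ x y, h (A.inf x y) = B.inf (h x) (h y)) ∧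
  (∀ x y, h (A.sup x y) = B.sup (h x) (h y)) ∧
  (∀ x, h (A.neg x) = B.neg (h x)) ∧
  (∀ x, h (A.dneg x) = B.dneg (h x)) ∧
  h A.top = B.top ∧ h A.bot = B.bot

def IsHomOn (A : DBA D) (B : DBA E) (S : Set D) (h : D → E) : Prop :=
  (∀ x ∈ S, ∀ y ∈ S, h (A.inf x y) = B.inf (h x) (h y)) ∧
  (∀ x ∈ S, ∀ y ∈ S, h (A.sup x y) = B.sup (h x) (h y)) ∧
  (∀ x ∈ S, h (A.neg x) = B.neg (h x)) ∧
  (∀ x ∈ S, h (A.dneg x) = B.dneg (h x)) ∧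
  h A.top = B.top ∧ h A.bot = B.bot

end DBA

section FCA

variable {G : Type u} {M : Type v}

/-- B^◇ -/
def odia (R : G → M → Prop) (B : Set M) : Set G := {g | ∃ m ∈ B, R g m}
/-- B^□ -/
def obox (R : G → M → Prop) (B : Set M) : Set G := {g | ∀ m, R g m → m ∈ B}
/-- A^◆ -/
def obdia (R : G → M → Prop) (A : Set G) : Set M := {m | ∃ g ∈ A, R g m}
/-- A^■ -/
def obbox (R : G → M → Prop) (A : Set G) : Set M := {m | ∀ g, R g m → g ∈ A}

def pinf (R : G → M → Prop) (p q : Set G × Set M) : Set G × Set M :=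
  (p.1 ∪ q.1, obbox R (p.1 ∪ q.1))
def psup (R : G → M → Prop) (p q : Set G × Set M) : Set G × Set M :=
  (odia R (p.2 ∩ q.2), p.2 ∩ q.2)
def pneg (R : G → M → Prop) (p : Set G × Set M) : Set G × Set M :=
  (p.1ᶜ, obbox R p.1ᶜ)
def pdneg (R : G → M → Prop) (p : Set G × Set M) : Set G × Set M :=
  (odia R p.2ᶜ, p.2ᶜ)
def ptop : Set G × Set M := (∅, ∅)
def pbot : Set G × Set M := (Set.univ, Set.univ)
/-- quasi-order on pairs: (A,B) ⊑ (C,D) iff C ⊆ A and D ⊆ B -/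
def ple (p q : Set G × Set M) : Prop := q.1 ⊆ p.1 ∧ q.2 ⊆ p.2

/-- object oriented protoconcept -/
def IsProto (R : G → M → Prop) (p : Set G × Set M) : Prop :=
  odia R (obbox R p.1) = odia R p.2
/-- object oriented semiconcept -/
def IsSemi (R : G → M → Prop) (p : Set G × Set M) : Prop :=
  obbox R p.1 = p.2 ∨ odia R p.2 = p.1

/-- continuity of the relation R -/
def ContRel [TopologicalSpace G] [TopologicalSpace M] (R : G → M → Prop) : Prop :=
  ∀ O : Set M, IsOpen O → IsOpen (odia R O) ∧ IsOpen (obox R O)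
/-- continuity of the converse relation R⁻¹ -/
def ContRelInv [TopologicalSpace G] [TopologicalSpace M] (R : G → M → Prop) : Prop :=
  ∀ O : Set G, IsOpen O → IsOpen (obdia R O) ∧ IsOpen (obbox R O)

def IsClopenProto [TopologicalSpace G] [TopologicalSpace M] (R : G → M → Prop)
    (p : Set G × Set M) : Prop :=
  IsProto R p ∧ IsClopen p.1 ∧ IsClopen p.2

def IsClopenSemi [TopologicalSpace G] [TopologicalSpace M] (R : G → M → Prop)
    (p : Set G × Set M) : Prop :=
  IsSemi R p ∧ IsClopen p.1 ∧ IsClopen p.2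

def pmap {G' : Type*} {M' : Type*} (α : G → G') (β : M → M') (p : Set G' × Set M') :
    Set G × Set M := (α ⁻¹' p.1, β ⁻¹' p.2)

end FCA

section StoneDBA

variable {D : Type u}

/-- the set of primary filters of a dBa, as a type -/
def PrimF (A : DBA D) : Type u := {F : Set D // A.IsPrimaryFilter F}
/-- the set of primary ideals of a dBa, as a type -/
def PrimI (A : DBA D) : Type u := {I : Set D // A.IsPrimaryIdeal I}
/-- F ∇ I iff F ∩ I = ∅ -/
def nabla (A : DBA D) : PrimF A → PrimI A → Prop := fun F I => F.val ∩ I.val = ∅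
/-- F_x -/
def Fset (A : DBA D) (x : D) : Set (PrimF A) := {F | x ∈ F.val}
/-- I_x -/
def Iset (A : DBA D) (x : D) : Set (PrimI A) := {I | x ∈ I.val}

/-- the topology T on primary filters, with the F_x as a subbase of closed sets -/
def filtTop (A : DBA D) : TopologicalSpace (PrimF A) :=
  TopologicalSpace.generateFrom {U | ∃ x : D, U = (Fset A x)ᶜ}
/-- the topology J on primary ideals, with the I_x as a subbase of closed sets -/
def idlTop (A : DBA D) : TopologicalSpace (PrimI A) :=
  TopologicalSpace.generateFrom {U | ∃ x : D, U = (Iset A x)ᶜ}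

/-- the map h(x) := (F_{¬x}, I_x) -/
def protoEmb (A : DBA D) (x : D) : Set (PrimF A) × Set (PrimI A) :=
  (Fset A (A.neg x), Iset A x)

end StoneDBA

section SemiPrim

variable {G : Type u} {M : Type v} [TopologicalSpace G] [TopologicalSpace M]

/-- a primary filter of the dBa of clopen object oriented semiconcepts -/
def IsSemiPrimFilter (R : G → M → Prop) (F : Set (Set G × Set M)) : Prop :=
  (∀ p ∈ F, IsClopenSemi R p) ∧
  (∀ p ∈ F, ∀ q ∈ F, pinf R p q ∈ F) ∧
  (∀ p ∈ F, ∀ z, IsClopenSemi R z → ple p z → z ∈ F) ∧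
  F ≠ {p | IsClopenSemi R p} ∧
  (∀ p, IsClopenSemi R p → (p ∈ F ∨ pneg R p ∈ F))

/-- a primary ideal of the dBa of clopen object oriented semiconcepts -/
def IsSemiPrimIdeal (R : G → M → Prop) (I : Set (Set G × Set M)) : Prop :=
  (∀ p ∈ I, IsClopenSemi R p) ∧
  (∀ p ∈ I, ∀ q ∈ I, psup R p q ∈ I) ∧
  (∀ p ∈ I, ∀ z, IsClopenSemi R z → ple z p → z ∈ I) ∧
  I ≠ {p | IsClopenSemi R p} ∧
  (∀ p, IsClopenSemi R p → (p ∈ I ∨ pdneg R p ∈ I))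

def SemiPF (R : G → M → Prop) := {F : Set (Set G × Set M) // IsSemiPrimFilter R F}
def SemiPI (R : G → M → Prop) := {I : Set (Set G × Set M) // IsSemiPrimIdeal R I}

def semiPFTop (R : G → M → Prop) : TopologicalSpace (SemiPF R) :=
  TopologicalSpace.generateFrom
    {U | ∃ p, IsClopenSemi R p ∧ U = {F : SemiPF R | p ∈ F.val}ᶜ}
def semiPITop (R : G → M → Prop) : TopologicalSpace (SemiPI R) :=
  TopologicalSpace.generateFrom
    {U | ∃ p, IsClopenSemi R p ∧ U = {I : SemiPI R | p ∈ I.val}ᶜ}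

end SemiPrim

section AuxStmt7

variable {G : Type u} {M : Type v} (R : G → M → Prop)

lemma odia_mono' {B C : Set M} (h : B ⊆ C) : odia R B ⊆ odia R C :=
  fun _ ⟨m, hm, hr⟩ => ⟨m, h hm, hr⟩

lemma obbox_mono' {A B : Set G} (h : A ⊆ B) : obbox R A ⊆ obbox R B :=
  fun _ hm g hr => h (hm g hr)

lemma odia_obbox_subset' (A : Set G) : odia R (obbox R A) ⊆ A :=
  fun _ ⟨_, hm, hr⟩ => hm _ hr

lemma subset_obbox_odia' (B : Set M) : B ⊆ obbox R (odia R B) :=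
  fun m hm g hr => ⟨m, hm, hr⟩

lemma odia_obbox_odia' (B : Set M) : odia R (obbox R (odia R B)) = odia R B :=
  subset_antisymm (odia_obbox_subset' R _) (odia_mono' R (subset_obbox_odia' R B))

lemma obbox_odia_obbox' (A : Set G) : obbox R (odia R (obbox R A)) = obbox R A :=
  subset_antisymm (obbox_mono' R (odia_obbox_subset' R A)) (subset_obbox_odia' R _)

lemma odia_empty' : odia R (∅ : Set M) = ∅ := by
  ext g; simp [odia]

lemma obbox_univ' : obbox R (Set.univ : Set G) = Set.univ := by
  ext m; simp [obbox]

lemma compl_obbox' (A : Set G) : (obbox R A)ᶜ = obdia R Aᶜ := by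
  ext m; simp [obbox, obdia]; tauto

lemma compl_odia' (B : Set M) : (odia R B)ᶜ = obox R Bᶜ := by
  ext g; simp [odia, obox]; tauto

lemma pair_box_congr {S T : Set G} (h : S = T) :
    ((S, obbox R S) : Set G × Set M) = (T, obbox R T) := by rw [h]

lemma pair_dia_congr {B D : Set M} (h : B = D) :
    ((odia R B, B) : Set G × Set M) = (odia R D, D) := by rw [h]

lemma semi_dia_sub {p : Set G × Set M} (h : IsSemi R p) : odia R p.2 ⊆ p.1 := by
  rcases h with h | h
  · rw [← h]; exact odia_obbox_subset' R _
  · rw [h]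

lemma semi_sub_box {p : Set G × Set M} (h : IsSemi R p) : p.2 ⊆ obbox R p.1 := by
  rcases h with h | h
  · rw [h]
  · rw [← h]; exact subset_obbox_odia' R _

lemma semi_dia_box {p : Set G × Set M} (h : IsSemi R p) :
    odia R (obbox R p.1) = odia R p.2 := by
  rcases h with h | h
  · rw [h]
  · rw [← h, odia_obbox_odia']

lemma semi_box_dia {p : Set G × Set M} (h : IsSemi R p) :
    obbox R (odia R p.2) = obbox R p.1 := by
  rcases h with h | h
  · rw [← h, obbox_odia_obbox']
  · rw [h]

variable [TopologicalSpace G] [TopologicalSpace M]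

lemma clopen_obbox' (hRinv : ContRelInv R) {A : Set G} (hA : IsClopen A) :
    IsClopen (obbox R A) := by
  constructor
  · rw [← isOpen_compl_iff, compl_obbox']
    exact (hRinv Aᶜ hA.compl.isOpen).1
  · exact (hRinv A hA.isOpen).2

lemma clopen_odia' (hR : ContRel R) {B : Set M} (hB : IsClopen B) :
    IsOpen (odia R B) ∧ IsClopen (odia R B) := by
  have ho : IsOpen (odia R B) := (hR B hB.isOpen).1
  refine ⟨ho, ?_, ho⟩
  rw [← isOpen_compl_iff, compl_odia']
  exact (hR Bᶜ hB.compl.isOpen).2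

end AuxStmt7

/-- For a CTSCR, the clopen object oriented semiconcepts are closed under
⊓, ⊔, ¬, ⌟ and contain ⊤, ⊥; they form a double Boolean algebra which is pure. -/
theorem stmt7 {X : Type u} {Y : Type v} [TopologicalSpace X] [TopologicalSpace Y]
    (R : X → Y → Prop) (hR : ContRel R) (hRinv : ContRelInv R) :
    (∀ p q : Set X × Set Y, IsClopenSemi R p → IsClopenSemi R q →
        IsClopenSemi R (pinf R p q) ∧ IsClopenSemi R (psup R p q)) ∧
    (∀ p : Set X × Set Y, IsClopenSemi R p →
        IsClopenSemi R (pneg R p) ∧ IsClopenSemi R (pdneg R p)) ∧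
    IsClopenSemi R (ptop : Set X × Set Y) ∧
    IsClopenSemi R (pbot : Set X × Set Y) ∧
    ∃ dba : DBA {p : Set X × Set Y // IsClopenSemi R p},
      (∀ p q, (dba.inf p q).val = pinf R p.val q.val) ∧
      (∀ p q, (dba.sup p q).val = psup R p.val q.val) ∧
      (∀ p, (dba.neg p).val = pneg R p.val) ∧
      (∀ p, (dba.dneg p).val = pdneg R p.val) ∧
      dba.top.val = (ptop : Set X × Set Y) ∧
      dba.bot.val = (pbot : Set X × Set Y) ∧
      dba.Pure := by
  have hclinf : ∀ p q : Set X × Set Y, IsClopenSemi R p → IsClopenSemi R q →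
      IsClopenSemi R (pinf R p q) := by
    rintro p q ⟨_, hp1, _⟩ ⟨_, hq1, _⟩
    exact ⟨Or.inl rfl, hp1.union hq1, clopen_obbox' R hRinv (hp1.union hq1)⟩
  have hclsup : ∀ p q : Set X × Set Y, IsClopenSemi R p → IsClopenSemi R q →
      IsClopenSemi R (psup R p q) := by
    rintro p q ⟨_, _, hp2⟩ ⟨_, _, hq2⟩
    exact ⟨Or.inr rfl, (clopen_odia' R hR (hp2.inter hq2)).2, hp2.inter hq2⟩
  have hclneg : ∀ p : Set X × Set Y, IsClopenSemi R p → IsClopenSemi R (pneg R p) := by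
    rintro p ⟨_, hp1, _⟩
    exact ⟨Or.inl rfl, hp1.compl, clopen_obbox' R hRinv hp1.compl⟩
  have hcldneg : ∀ p : Set X × Set Y, IsClopenSemi R p → IsClopenSemi R (pdneg R p) := by
    rintro p ⟨_, _, hp2⟩
    exact ⟨Or.inr rfl, (clopen_odia' R hR hp2.compl).2, hp2.compl⟩
  have htop : IsClopenSemi R (ptop : Set X × Set Y) :=
    ⟨Or.inr (odia_empty' R), isClopen_empty, isClopen_empty⟩
  have hbot : IsClopenSemi R (pbot : Set X × Set Y) :=
    ⟨Or.inl (obbox_univ' R), isClopen_univ, isClopen_univ⟩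
  refine ⟨fun p q hp hq => ⟨hclinf p q hp hq, hclsup p q hp hq⟩,
    fun p hp => ⟨hclneg p hp, hcldneg p hp⟩, htop, hbot, ?_⟩
  refine ⟨{
    inf := fun p q => ⟨pinf R p.val q.val, hclinf _ _ p.2 q.2⟩
    sup := fun p q => ⟨psup R p.val q.val, hclsup _ _ p.2 q.2⟩
    neg := fun p => ⟨pneg R p.val, hclneg _ p.2⟩
    dneg := fun p => ⟨pdneg R p.val, hcldneg _ p.2⟩
    top := ⟨ptop, htop⟩
    bot := ⟨pbot, hbot⟩
    ax1a := fun x y => Subtype.ext (pair_box_congr R (by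
      ext g; simp only [pinf, Set.mem_union]; tauto))
    ax2a := fun x y => Subtype.ext (pair_box_congr R (by
      ext g; simp only [pinf, Set.mem_union]; tauto))
    ax3a := fun x y z => Subtype.ext (pair_box_congr R (by
      ext g; simp only [pinf, Set.mem_union]; tauto))
    ax4a := fun x => Subtype.ext (pair_box_congr R (by
      ext g; simp only [pinf, pneg, Set.mem_union, Set.mem_compl_iff]; tauto))
    ax5a := fun x y => Subtype.ext (pair_box_congr R (by
      show x.val.1 ∪ odia R (x.val.2 ∩ y.val.2) = x.val.1 ∪ x.val.1
      rw [Set.union_self]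
      exact Set.union_eq_self_of_subset_right
        ((odia_mono' R Set.inter_subset_left).trans (semi_dia_sub R x.2.1))))
    ax6a := fun x y z => Subtype.ext (pair_box_congr R (by
      ext g; simp only [pinf, pneg, Set.mem_union, Set.mem_compl_iff]; tauto))
    ax7a := fun x y => Subtype.ext (pair_box_congr R (by
      ext g; simp only [pinf, pneg, Set.mem_union, Set.mem_compl_iff]; tauto))
    ax8a := fun x y => Subtype.ext (pair_box_congr R (by
      ext g; simp only [pinf, pneg, Set.mem_union, Set.mem_compl_iff]; tauto))
    ax9a := fun x => Subtype.ext (by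
      show (x.val.1 ∪ x.val.1ᶜ, obbox R (x.val.1 ∪ x.val.1ᶜ)) = pbot
      rw [Set.union_compl_self, obbox_univ']; rfl)
    ax10a := Subtype.ext (pair_box_congr R (by
      show (Set.univ : Set X)ᶜ = ∅ ∪ ∅; simp))
    ax11a := Subtype.ext (by
      show ((∅ : Set X)ᶜ, obbox R (∅ : Set X)ᶜ) = pbot
      rw [Set.compl_empty, obbox_univ']; rfl)
    ax1b := fun x y => Subtype.ext (pair_dia_congr R (by
      ext m; simp only [psup, Set.mem_inter_iff]; tauto))
    ax2b := fun x y => Subtype.ext (pair_dia_congr R (by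
      ext m; simp only [psup, Set.mem_inter_iff]; tauto))
    ax3b := fun x y z => Subtype.ext (pair_dia_congr R (by
      ext m; simp only [psup, Set.mem_inter_iff]; tauto))
    ax4b := fun x => Subtype.ext (pair_dia_congr R (by
      ext m; simp only [psup, pdneg, Set.mem_inter_iff, Set.mem_compl_iff]; tauto))
    ax5b := fun x y => Subtype.ext (pair_dia_congr R (by
      show x.val.2 ∩ obbox R (x.val.1 ∪ y.val.1) = x.val.2 ∩ x.val.2
      rw [Set.inter_self]
      exact Set.inter_eq_self_of_subset_left
        ((semi_sub_box R x.2.1).trans (obbox_mono' R Set.subset_union_left))))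
    ax6b := fun x y z => Subtype.ext (pair_dia_congr R (by
      ext m; simp only [psup, pdneg, Set.mem_inter_iff, Set.mem_compl_iff]; tauto))
    ax7b := fun x y => Subtype.ext (pair_dia_congr R (by
      ext m; simp only [psup, pdneg, Set.mem_inter_iff, Set.mem_compl_iff]; tauto))
    ax8b := fun x y => Subtype.ext (pair_dia_congr R (by
      ext m; simp only [psup, pdneg, Set.mem_inter_iff, Set.mem_compl_iff]; tauto))
    ax9b := fun x => Subtype.ext (by
      show (odia R (x.val.2 ∩ x.val.2ᶜ), x.val.2 ∩ x.val.2ᶜ) = ptop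
      rw [Set.inter_compl_self, odia_empty']; rfl)
    ax10b := Subtype.ext (pair_dia_congr R (by
      show (∅ : Set Y)ᶜ = Set.univ ∩ Set.univ; simp))
    ax11b := Subtype.ext (by
      show (odia R (Set.univ : Set Y)ᶜ, (Set.univ : Set Y)ᶜ) = ptop
      rw [Set.compl_univ, odia_empty']; rfl)
    ax12 := fun x => Subtype.ext (by
      show (odia R (obbox R (x.val.1 ∪ x.val.1) ∩ obbox R (x.val.1 ∪ x.val.1)),
              obbox R (x.val.1 ∪ x.val.1) ∩ obbox R (x.val.1 ∪ x.val.1)) =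
           (odia R (x.val.2 ∩ x.val.2) ∪ odia R (x.val.2 ∩ x.val.2),
              obbox R (odia R (x.val.2 ∩ x.val.2) ∪ odia R (x.val.2 ∩ x.val.2)))
      rw [Set.union_self, Set.inter_self, Set.inter_self, Set.union_self,
        semi_dia_box R x.2.1, semi_box_dia R x.2.1])
  }, fun p q => rfl, fun p q => rfl, fun p => rfl, fun p => rfl, rfl, rfl, ?_⟩
  intro x
  rcases x.2.1 with h | h
  · left
    apply Subtype.ext
    show (x.val.1 ∪ x.val.1, obbox R (x.val.1 ∪ x.val.1)) = x.val
    rw [Set.union_self, h]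
  · right
    apply Subtype.ext
    show (odia R (x.val.2 ∩ x.val.2), x.val.2 ∩ x.val.2) = x.val
    rw [Set.inter_self, h]
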